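/- Let Q be a 3×3 real matrix that is symmetric and has trace zero. Then there exist s ∈ ℝ and a unit vector n ∈ ℝ³ with Q = s(n⊗n − (1/3)Id) if and only if (tr(Q²))³ = 54·(det Q)². -/

import Mathlib

/-!
If `Q` is symmetric and traceless with eigenvalues `a, b, c` (so `a + b + c = 0`), then
`tr(Q²) = a² + b² + c²` and `det Q = abc`, and on the plane `a + b + c = 0` the identity
`(a² + b² + c²)³ - 54 (abc)² = 2 ((a - b)(b - c)(a - c))²` holds. So the condition says exactly
that two eigenvalues coincide, `(m, m, -2m)` up to order, and diagonalising `Q` in an orthonormal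
eigenbasis writes it as `-3m (n⊗n - Id/3)` with `n` the eigenvector of `-2m`. Conversely
`P = n⊗n` is an idempotent of trace one, which gives `tr(Q²) = 2s²/3` and `det Q = 2s³/27`.
-/

open Matrix

noncomputable def uniaxial (s : ℝ) (n : Fin 3 → ℝ) : Matrix (Fin 3) (Fin 3) ℝ :=
  s • (vecMulVec n n - (1 / 3 : ℝ) • 1)

section Uniaxial

variable {s : ℝ} {n : Fin 3 → ℝ}

theorem trace_uniaxial_mul_self (hn : n ⬝ᵥ n = 1) :
    trace (uniaxial s n * uniaxial s n) = 2 / 3 * s ^ 2 := by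
  have hP : vecMulVec n n * vecMulVec n n = vecMulVec n n := by
    rw [vecMulVec_mul_vecMulVec, hn, one_smul]
  simp only [uniaxial, sub_mul, mul_sub, hP, Algebra.smul_mul_assoc, Algebra.mul_smul_comm,
    mul_one, one_mul, trace_smul, trace_sub, trace_vecMulVec, hn, trace_one, Fintype.card_fin,
    smul_eq_mul]
  ring

theorem det_uniaxial (hn : n ⬝ᵥ n = 1) : det (uniaxial s n) = 2 / 27 * s ^ 3 := by
  have hrankOne :
      uniaxial s n = (-s / 3) • (1 + replicateCol Unit ((-3 : ℝ) • n) * replicateRow Unit n) := by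
    rw [uniaxial, ← vecMulVec_eq, smul_vecMulVec]
    ext i j
    simp only [Matrix.smul_apply, Matrix.sub_apply, Matrix.add_apply, vecMulVec_apply, one_apply,
      smul_eq_mul]
    split_ifs <;> ring
  rw [hrankOne, det_smul, det_one_add_replicateCol_mul_replicateRow, dotProduct_smul, hn,
    Fintype.card_fin, smul_eq_mul]
  ring

theorem trace_uniaxial_mul_self_pow_three (hn : n ⬝ᵥ n = 1) :
    trace (uniaxial s n * uniaxial s n) ^ 3 = 54 * det (uniaxial s n) ^ 2 := by
  rw [trace_uniaxial_mul_self hn, det_uniaxial hn]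
  ring

end Uniaxial

theorem mul_diagonal_single_mul_star {ι R : Type*} [Fintype ι] [DecidableEq ι] [Semiring R]
    [StarRing R] (U : Matrix ι ι R) (k : ι) :
    U * diagonal (Pi.single k 1) * star U = vecMulVec (U.col k) (star (U.col k)) := by
  ext i j
  simp [mul_apply, diagonal, Pi.single_apply, vecMulVec_apply]

theorem Matrix.IsHermitian.trace_mul_self {𝕜 ι : Type*} [RCLike 𝕜] [Fintype ι] [DecidableEq ι]
    {A : Matrix ι ι 𝕜} (hA : A.IsHermitian) :
    trace (A * A) = ∑ i, (hA.eigenvalues i : 𝕜) ^ 2 := by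
  conv_lhs => rw [hA.spectral_theorem, ← map_mul, Unitary.conjStarAlgAut_apply, trace_mul_cycle,
    Unitary.coe_star_mul_self, one_mul, diagonal_mul_diagonal, trace_diagonal]
  simp [sq]

theorem sum_sq_pow_three_sub_mul_sq_of_add_add_eq_zero {R : Type*} [CommRing R] {a b c : R}
    (h : a + b + c = 0) :
    (a ^ 2 + b ^ 2 + c ^ 2) ^ 3 - 54 * (a * b * c) ^ 2 = 2 * ((a - b) * (b - c) * (a - c)) ^ 2 := by
  rw [eq_neg_of_add_eq_zero_right h]
  ring

theorem exists_eq_smul_single_sub_of_sum_eq_zero {d : Fin 3 → ℝ} (htr : ∑ i, d i = 0)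
    (h : (∑ i, d i ^ 2) ^ 3 = 54 * (∏ i, d i) ^ 2) :
    ∃ (s : ℝ) (k : Fin 3), d = s • (Pi.single k 1 - (1 / 3 : ℝ) • 1) := by
  simp only [Fin.sum_univ_three, Fin.prod_univ_three] at htr h
  have hdisc : ((d 0 - d 1) * (d 1 - d 2) * (d 0 - d 2)) ^ 2 = 0 := by
    linear_combination (h - sum_sq_pow_three_sub_mul_sq_of_add_add_eq_zero htr) / 2
  rcases mul_eq_zero.mp (pow_eq_zero_iff two_ne_zero |>.mp hdisc) with h' | h02
  · rcases mul_eq_zero.mp h' with h01 | h12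
    · refine ⟨-3 * d 0, 2, ?_⟩
      ext i; fin_cases i <;> simp <;> linarith
    · refine ⟨-3 * d 1, 0, ?_⟩
      ext i; fin_cases i <;> simp <;> linarith
  · refine ⟨-3 * d 0, 1, ?_⟩
    ext i; fin_cases i <;> simp <;> linarith

theorem dotProduct_col_self_of_mem_unitary {ι : Type*} [Fintype ι] [DecidableEq ι]
    (U : unitary (Matrix ι ι ℝ)) (k : ι) :
    (U : Matrix ι ι ℝ).col k ⬝ᵥ (U : Matrix ι ι ℝ).col k = 1 := by
  simpa [mul_apply, dotProduct] using congr_fun₂ (Unitary.coe_star_mul_self U) k k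

theorem conjStarAlgAut_diagonal_eq_uniaxial (U : unitary (Matrix (Fin 3) (Fin 3) ℝ)) (k : Fin 3)
    (s : ℝ) :
    Unitary.conjStarAlgAut ℝ _ U (diagonal (s • (Pi.single k 1 - (1 / 3 : ℝ) • 1))) =
      uniaxial s ((U : Matrix (Fin 3) (Fin 3) ℝ).col k) := by
  rw [← diagonalAlgHom_apply (R := ℝ)]
  simp only [map_smul, map_sub, map_one, diagonalAlgHom_apply, Unitary.conjStarAlgAut_apply,
    mul_diagonal_single_mul_star, star_trivial]
  rfl

theorem exists_uniaxial_of_trace_mul_self_pow_three {Q : Matrix (Fin 3) (Fin 3) ℝ}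
    (hQ : Q.IsHermitian) (htr : Q.trace = 0) (h : trace (Q * Q) ^ 3 = 54 * det Q ^ 2) :
    ∃ (s : ℝ) (n : Fin 3 → ℝ), n ⬝ᵥ n = 1 ∧ Q = uniaxial s n := by
  rw [hQ.trace_eq_sum_eigenvalues] at htr
  rw [hQ.trace_mul_self, hQ.det_eq_prod_eigenvalues] at h
  obtain ⟨s, k, hd⟩ := exists_eq_smul_single_sub_of_sum_eq_zero (by simpa using htr)
    (by simpa using h)
  refine ⟨s, _, dotProduct_col_self_of_mem_unitary hQ.eigenvectorUnitary k, ?_⟩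
  rw [← conjStarAlgAut_diagonal_eq_uniaxial, ← hd]
  simpa only [RCLike.ofReal_real_eq_id, CompTriple.comp_eq] using hQ.spectral_theorem

theorem stmt2 (Q : Matrix (Fin 3) (Fin 3) ℝ)
    (hsym : Q.IsSymm) (htr : Q.trace = 0) :
    (∃ s : ℝ, ∃ n : Fin 3 → ℝ, (∑ i, (n i) ^ 2) = 1 ∧
        Q = s • (Matrix.vecMulVec n n - (1 / 3 : ℝ) • (1 : Matrix (Fin 3) (Fin 3) ℝ))) ↔
      ((Q * Q).trace) ^ 3 = 54 * (Q.det) ^ 2 := by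
  have hdot (n : Fin 3 → ℝ) : ∑ i, n i ^ 2 = n ⬝ᵥ n := by simp [dotProduct, sq]
  simp only [hdot]
  constructor
  · rintro ⟨s, n, hn, rfl⟩
    exact trace_uniaxial_mul_self_pow_three hn
  · exact exists_uniaxial_of_trace_mul_self_pow_three (isHermitian_iff_isSymm.mpr hsym) htr
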